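/- arXiv:2302.14606 — 10 statements merged into one kernel-verified Lean document; each statement's English description precedes it below -/
import Mathlib

section
/- Let V be a 2-dimensional real symplectic vector space with symplectic form ·, and for v ∈ V let τ_v denote the transvection w ↦ w + (v·w)v. Then for all u, v, w ∈ V and integers l, n, m, setting Φ = τ_u^l ∘ τ_v^n ∘ τ_w^m, one has nm(v·w)² + lm(u·w)² + ln(u·v)² = lmn(w·u)(w·v)(v·u) + 2 − tr(Φ). -/
open TensorProduct

/-- trace formula for a product of powers of transvections on a
2-dimensional real symplectic vector space. The map `τ v k` is the `k`-th power
of the transvection associated to `v`, characterized by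
`τ v k w' = w' + k (ω v w') v`. -/
theorem stmt0
    (V : Type*) [AddCommGroup V] [Module ℝ V] [FiniteDimensional ℝ V]
    (hdim : Module.finrank ℝ V = 2)
    (ω : V →ₗ[ℝ] V →ₗ[ℝ] ℝ)
    (halt : ∀ x : V, ω x x = 0)
    (hnondeg : ∀ x : V, (∀ y : V, ω x y = 0) → x = 0)
    (τ : V → ℤ → Module.End ℝ V)
    (hτ : ∀ (v : V) (k : ℤ) (w' : V), τ v k w' = w' + (k : ℝ) • ((ω v w') • v))
    (u v w : V) (l n m : ℤ) :
    ((n * m : ℤ) : ℝ) * (ω v w) ^ 2 + ((l * m : ℤ) : ℝ) * (ω u w) ^ 2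
        + ((l * n : ℤ) : ℝ) * (ω u v) ^ 2
      = ((l * m * n : ℤ) : ℝ) * (ω w u) * (ω w v) * (ω v u) + 2
          - LinearMap.trace ℝ V (τ u l ∘ₗ τ v n ∘ₗ τ w m) := by
  have skew : ∀ x y : V, ω y x = - ω x y := by
    intro x y
    have h := halt (x + y)
    simp only [map_add, LinearMap.add_apply, halt] at h
    linarith
  have htr : ∀ (f : V →ₗ[ℝ] ℝ) (x : V),
      LinearMap.trace ℝ V (LinearMap.smulRight f x) = f x := by
    intro f x
    have h : LinearMap.smulRight f x = dualTensorHom ℝ V V (f ⊗ₜ[ℝ] x) := by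
      ext y; simp [dualTensorHom_apply]
    rw [h, LinearMap.trace_eq_contract_apply, contractLeft_apply]
  have hΦ : τ u l ∘ₗ τ v n ∘ₗ τ w m
      = LinearMap.id
        + (m : ℝ) • LinearMap.smulRight (ω w) w
        + (n : ℝ) • LinearMap.smulRight (ω v) v
        + ((n : ℝ) * m * ω v w) • LinearMap.smulRight (ω w) v
        + (l : ℝ) • LinearMap.smulRight (ω u) u
        + ((l : ℝ) * m * ω u w) • LinearMap.smulRight (ω w) u
        + ((l : ℝ) * n * ω u v) • LinearMap.smulRight (ω v) u
        + ((l : ℝ) * n * m * ω v w * ω u v) • LinearMap.smulRight (ω w) u := by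
    ext y
    simp only [LinearMap.comp_apply, hτ, map_add, map_smul, LinearMap.add_apply,
      LinearMap.smul_apply, LinearMap.id_apply, LinearMap.smulRight_apply,
      smul_eq_mul, smul_smul]
    module
  rw [hΦ]
  simp only [map_add, map_smul, htr, LinearMap.trace_id, hdim, halt,
    smul_eq_mul]
  rw [skew w v, skew w u, skew v u]
  push_cast
  ring
end

section
/- Let x, y, z be integers satisfying x² + y² + z² − xyz = a with a ∈ {0, 4}, and suppose |x|, |y|, |z| are pairwise distinct. Then replacing the element of largest absolute value, say x, by its mutation x̂ = yz − x strictly decreases |x| + |y| + |z|. -/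
private theorem arith' (a t u m n : ℤ) (ha0 : 0 ≤ a)
    (hn : 0 ≤ n) (hnm : n ≤ m)
    (htm : m < t) (htu : t ≤ u)
    (hsum : m*n = t+u) (hprod : t*u = m^2+n^2-a) : False := by
  have ht : 1 ≤ t := by linarith
  have hmn2 : 2*t ≤ m*n := by linarith
  have hm3 : 3 ≤ m := by nlinarith
  have hn3 : 3 ≤ n := by nlinarith
  have ht2 : t^2 ≤ m^2+n^2-a := by nlinarith
  have htm1 : t*(m+1) ≤ t^2 := by nlinarith
  have hkey : 0 ≤ (t - (m+1)) * ((m^2+n^2-a) - t*(m+1)) :=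
    mul_nonneg (by linarith) (by linarith)
  have hst : m*n*t = (t+u)*t := by rw [hsum]
  nlinarith [hkey, hst, mul_le_mul_of_nonneg_left hnm
      (mul_nonneg (by linarith) (by linarith : (0:ℤ) ≤ t)),
    mul_le_mul_of_nonneg_left hn3 (by positivity : (0:ℤ) ≤ m*(m+1))]

/-- for an integer solution of `x² + y² + z² − xyz = a` with
`a ∈ {0,4}` and pairwise distinct absolute values, mutating the coordinate of
largest absolute value (say `x ↦ yz − x`) strictly decreases `|x| + |y| + |z|`. -/
theorem stmt1 (a x y z : ℤ) (ha : a = 0 ∨ a = 4)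
    (heq : x ^ 2 + y ^ 2 + z ^ 2 - x * y * z = a)
    (hxy : |x| ≠ |y|) (hxz : |x| ≠ |z|) (hyz : |y| ≠ |z|)
    (hy : |y| < |x|) (hz : |z| < |x|) :
    |y * z - x| + |y| + |z| < |x| + |y| + |z| := by
  suffices habs : |y * z - x| < |x| by linarith
  by_contra hcon
  push_neg at hcon
  have hprodE : x * (y * z - x) = y ^ 2 + z ^ 2 - a := by linear_combination -heq
  have habs_prod : |x| * |y * z - x| = |y ^ 2 + z ^ 2 - a| := by
    rw [← abs_mul, hprodE]
  have hmy : y ^ 2 = |y| ^ 2 := (sq_abs y).symm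
  have hmz : z ^ 2 = |z| ^ 2 := (sq_abs z).symm
  have hy0 : 0 ≤ |y| := abs_nonneg y
  have hz0 : 0 ≤ |z| := abs_nonneg z
  rcases lt_or_ge 0 (y ^ 2 + z ^ 2 - a) with hD | hD
  · -- positive product: x and y*z-x have the same sign
    have hDeq : |x| * |y * z - x| = y ^ 2 + z ^ 2 - a := by
      rw [habs_prod, abs_of_pos hD]
    have hsame : 0 < x * (y * z - x) := hprodE ▸ hD
    have hsum : |y| * |z| = |x| + |y * z - x| := by
      rw [← abs_mul]
      rcases mul_pos_iff.mp hsame with ⟨hx1, hx2⟩ | ⟨hx1, hx2⟩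
      · rw [abs_of_pos (show (0:ℤ) < y * z by nlinarith), abs_of_pos hx1,
          abs_of_pos hx2]
        ring
      · rw [abs_of_neg (show y * z < 0 by nlinarith), abs_of_neg hx1,
          abs_of_neg hx2]
        ring
    have ha0 : 0 ≤ a := by rcases ha with rfl | rfl <;> norm_num
    have hprod' : |x| * |y * z - x| = |y| ^ 2 + |z| ^ 2 - a := by
      rw [hDeq, hmy, hmz]
    rcases le_total |z| |y| with hle | hle
    · exact arith' a |x| (|y * z - x|) (|y|) (|z|) ha0 hz0 hle hy hcon hsum hprod'
    · exact arith' a |x| (|y * z - x|) (|z|) (|y|) ha0 hy0 hle hz hcon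
        (by rw [mul_comm]; exact hsum) (by rw [hprod']; ring)
  · -- small case: y² + z² ≤ a, forces a = 4 and tiny values
    have hone : 1 ≤ |y| ∨ 1 ≤ |z| := by omega
    have hyz1 : 1 ≤ y ^ 2 + z ^ 2 := by
      rcases hone with h | h <;> nlinarith
    have ha4 : a = 4 := by
      rcases ha with rfl | rfl
      · linarith
      · rfl
    subst ha4
    have ht2 : 2 ≤ |x| := by omega
    have hD3 : |y ^ 2 + z ^ 2 - 4| ≤ 3 := by
      rw [abs_of_nonpos (by linarith)]; linarith
    have : 4 ≤ |x| * |y * z - x| := by nlinarith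
    linarith [habs_prod ▸ this]
end

section
/- Let (x, y, z) be an integer solution of x² + y² + z² − xyz = 0 that is weakly minimal, i.e. |x| ≤ |yz − x|, |y| ≤ |xz − y|, and |z| ≤ |xy − z|. Then, up to permuting coordinates and changing the signs of two coordinates, (x,y,z) equals (0,0,0) or (3,3,3). -/
lemma aux333 (a b c : ℤ) (hc : 0 ≤ c) (hcb : c ≤ b) (hba : b ≤ a)
    (heq : a * b * c = a ^ 2 + b ^ 2 + c ^ 2) (h1 : a ^ 2 ≤ b ^ 2 + c ^ 2) :
    (a = 0 ∧ b = 0 ∧ c = 0) ∨ (a = 3 ∧ b = 3 ∧ c = 3) := by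
  rcases eq_or_lt_of_le hc with h0 | hcpos
  · left
    subst h0
    have ha2 : a ^ 2 = 0 := by nlinarith [sq_nonneg a, sq_nonneg b]
    have hb2 : b ^ 2 = 0 := by nlinarith [sq_nonneg a, sq_nonneg b]
    refine ⟨?_, ?_, rfl⟩ <;> [exact pow_eq_zero_iff (two_ne_zero) |>.mp ha2;
      exact pow_eq_zero_iff (two_ne_zero) |>.mp hb2]
  · have hb : 1 ≤ b := by omega
    have ha : 1 ≤ a := by omega
    have hbc : a + 1 ≤ b * c := by nlinarith
    have hc2 : 2 ≤ c := by nlinarith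
    have hc3 : 3 ≤ c := by
      by_contra h
      have : c = 2 := by omega
      subst this
      nlinarith [sq_nonneg (a - b)]
    have hkey : b * (b * c) ≤ a * (b * c) :=
      mul_le_mul_of_nonneg_right hba (by positivity)
    have hc4 : c ≤ 4 := by nlinarith [hkey]
    have hb5 : b ≤ 5 := by nlinarith [hkey]
    have ha6 : a ≤ 6 := by nlinarith
    interval_cases c <;> interval_cases b <;> interval_cases a <;> omega

lemma minin (x y z : ℤ) (heq : x ^ 2 + y ^ 2 + z ^ 2 - x * y * z = 0)
    (hmx : |x| ≤ |y * z - x|) : x ^ 2 ≤ y ^ 2 + z ^ 2 := by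
  have k : x * (y * z - x) = y ^ 2 + z ^ 2 := by linear_combination -heq
  calc x ^ 2 = |x| * |x| := by rw [abs_mul_abs_self, sq]
    _ ≤ |x| * |y * z - x| := mul_le_mul_of_nonneg_left hmx (abs_nonneg x)
    _ = |x * (y * z - x)| := (abs_mul _ _).symm
    _ = |y ^ 2 + z ^ 2| := by rw [k]
    _ = y ^ 2 + z ^ 2 := abs_of_nonneg (by positivity)

/-- a weakly minimal integer solution of `x² + y² + z² − xyz = 0`
is, up to permutations and simultaneous sign changes of two coordinates,
equal to `(0,0,0)` or `(3,3,3)`.  (The orbit of `(3,3,3)` under permutations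
and double sign changes is exactly the set of triples with all absolute values
equal to `3` and product `27`.) -/
theorem stmt2 (x y z : ℤ)
    (heq : x ^ 2 + y ^ 2 + z ^ 2 - x * y * z = 0)
    (hmx : |x| ≤ |y * z - x|) (hmy : |y| ≤ |x * z - y|) (hmz : |z| ≤ |x * y - z|) :
    (x = 0 ∧ y = 0 ∧ z = 0) ∨ (|x| = 3 ∧ |y| = 3 ∧ |z| = 3 ∧ x * y * z = 27) := by
  have h1 : x ^ 2 ≤ y ^ 2 + z ^ 2 := minin x y z heq hmx
  have h2 : y ^ 2 ≤ x ^ 2 + z ^ 2 := by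
    have := minin y x z (by linarith [heq]) hmy
    linarith
  have h3 : z ^ 2 ≤ x ^ 2 + y ^ 2 := by
    have := minin z x y (by linarith [heq]) hmz
    linarith
  have hprod : x * y * z = x ^ 2 + y ^ 2 + z ^ 2 := by linarith
  have habc : |x| * |y| * |z| = |x| ^ 2 + |y| ^ 2 + |z| ^ 2 := by
    rw [← abs_mul, ← abs_mul, hprod, abs_of_nonneg (by positivity)]
    simp [sq_abs]
  have hh1 : |x| ^ 2 ≤ |y| ^ 2 + |z| ^ 2 := by simpa [sq_abs] using h1
  have hh2 : |y| ^ 2 ≤ |x| ^ 2 + |z| ^ 2 := by simpa [sq_abs] using h2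
  have hh3 : |z| ^ 2 ≤ |x| ^ 2 + |y| ^ 2 := by simpa [sq_abs] using h3
  have key : (|x| = 0 ∧ |y| = 0 ∧ |z| = 0) ∨ (|x| = 3 ∧ |y| = 3 ∧ |z| = 3) := by
    rcases le_total |x| |y| with hxy | hxy <;> rcases le_total |y| |z| with hyz | hyz <;>
      rcases le_total |x| |z| with hxz | hxz
    · rcases aux333 |z| |y| |x| (abs_nonneg x) hxy hyz (by linear_combination habc) (by linarith) with
        ⟨p, q, r⟩ | ⟨p, q, r⟩ <;> [exact Or.inl ⟨r, q, p⟩; exact Or.inr ⟨r, q, p⟩]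
    · rcases aux333 |z| |y| |x| (abs_nonneg x) hxy hyz (by linear_combination habc) (by linarith) with
        ⟨p, q, r⟩ | ⟨p, q, r⟩ <;> [exact Or.inl ⟨r, q, p⟩; exact Or.inr ⟨r, q, p⟩]
    · rcases aux333 |y| |z| |x| (abs_nonneg x) hxz hyz (by linear_combination habc) (by linarith) with
        ⟨p, q, r⟩ | ⟨p, q, r⟩ <;> [exact Or.inl ⟨r, p, q⟩; exact Or.inr ⟨r, p, q⟩]
    · rcases aux333 |y| |x| |z| (abs_nonneg z) hxz hxy (by linear_combination habc) (by linarith) with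
        ⟨p, q, r⟩ | ⟨p, q, r⟩ <;> [exact Or.inl ⟨q, p, r⟩; exact Or.inr ⟨q, p, r⟩]
    · rcases aux333 |z| |x| |y| (abs_nonneg y) hxy hxz (by linear_combination habc) (by linarith) with
        ⟨p, q, r⟩ | ⟨p, q, r⟩ <;> [exact Or.inl ⟨q, r, p⟩; exact Or.inr ⟨q, r, p⟩]
    · rcases aux333 |x| |z| |y| (abs_nonneg y) hyz hxz (by linear_combination habc) (by linarith) with
        ⟨p, q, r⟩ | ⟨p, q, r⟩ <;> [exact Or.inl ⟨p, r, q⟩; exact Or.inr ⟨p, r, q⟩]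
    · rcases aux333 |x| |y| |z| (abs_nonneg z) hyz hxy (by linear_combination habc) (by linarith) with
        ⟨p, q, r⟩ | ⟨p, q, r⟩ <;> [exact Or.inl ⟨p, q, r⟩; exact Or.inr ⟨p, q, r⟩]
    · rcases aux333 |x| |y| |z| (abs_nonneg z) hyz hxy (by linear_combination habc) (by linarith) with
        ⟨p, q, r⟩ | ⟨p, q, r⟩ <;> [exact Or.inl ⟨p, q, r⟩; exact Or.inr ⟨p, q, r⟩]
  rcases key with ⟨p, q, r⟩ | ⟨p, q, r⟩
  · exact Or.inl ⟨abs_eq_zero.mp p, abs_eq_zero.mp q, abs_eq_zero.mp r⟩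
  · refine Or.inr ⟨p, q, r, ?_⟩
    have hx2 : x ^ 2 = 9 := by rw [← sq_abs, p]; norm_num
    have hy2 : y ^ 2 = 9 := by rw [← sq_abs, q]; norm_num
    have hz2 : z ^ 2 = 9 := by rw [← sq_abs, r]; norm_num
    rw [hprod, hx2, hy2, hz2]
    norm_num
end

section
/- Let (x, y, z) be an integer solution of x² + y² + z² − xyz = 4 that is weakly minimal, i.e. |x| ≤ |yz − x|, |y| ≤ |xz − y|, and |z| ≤ |xy − z|. Then, up to permuting coordinates and changing the signs of two coordinates, (x,y,z) equals (2,0,0), (−1,1,1), or (2,t,t) for some integer t ≥ 2. -/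
/-!
Weak minimality in `x` says `x² ≤ (yz - x)²`, i.e. `2xyz ≤ (yz)²`. If `xyz ≤ 0`, the equation gives
`|x|² + |y|² + |z|² + |xyz| = 4`, which leaves only `(2,0,0)` and `(1,1,1)` up to order. If `xyz > 0`,
the absolute values `c ≤ b ≤ a` solve the same equation with `2a ≤ bc`; then `a` is the smaller root
of `T² - bcT + b² + c² - 4`, so `b` lies below both roots and the value of this quadratic at `b`,
namely `(c - 2)(c + 2 - b²)`, is nonnegative. This forces `c = 2`, and then `a = b`.
-/

theorem two_mul_abs_le_abs_of_abs_le_abs_sub {R : Type*} [CommRing R] [LinearOrder R]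
    [IsStrictOrderedRing R] {a m : R} (hpos : 0 < a * m) (h : |a| ≤ |m - a|) :
    2 * |a| ≤ |m| := by
  rw [← sq_le_sq] at h
  have hm : 0 < |m| := abs_pos.2 (right_ne_zero_of_mul hpos.ne')
  have key : 2 * |a| * |m| ≤ |m| * |m| := by
    rw [mul_assoc, ← abs_mul, abs_of_pos hpos, abs_mul_abs_self]
    linarith
  exact le_of_mul_le_mul_right key hm

theorem eq_two_and_eq_of_sorted {u v w : ℤ} (hw : 1 ≤ w) (hwv : w ≤ v)
    (hvu : v ≤ u) (heq : u ^ 2 + v ^ 2 + w ^ 2 - u * v * w = 4) (hmin : 2 * u ≤ v * w) :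
    w = 2 ∧ u = v := by
  have hw2 : 2 ≤ w := by nlinarith
  have hvieta : (w - 2) * (w + 2 - v ^ 2) = (v - u) * (v - (v * w - u)) := by
    linear_combination heq
  have hnonneg : 0 ≤ (w - 2) * (w + 2 - v ^ 2) :=
    hvieta ▸ mul_nonneg_of_nonpos_of_nonpos (by linarith) (by linarith)
  have hw : w = 2 := by
    by_contra hne
    have hw3 : 3 ≤ w := by omega
    have hv2 : v ^ 2 ≤ w + 2 := by nlinarith
    nlinarith [mul_le_mul hwv hwv (by linarith) (by linarith)]
  subst hw
  have : (u - v) ^ 2 = 0 := by linear_combination heq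
  exact ⟨rfl, sub_eq_zero.1 (pow_eq_zero_iff two_ne_zero |>.1 this)⟩

theorem exists_multiset_eq_two_t_t {a b c : ℤ} (ha : 1 ≤ a) (hb : 1 ≤ b) (hc : 1 ≤ c)
    (heq : a ^ 2 + b ^ 2 + c ^ 2 - a * b * c = 4)
    (hma : 2 * a ≤ b * c) (hmb : 2 * b ≤ a * c) (hmc : 2 * c ≤ a * b) :
    ∃ t, 2 ≤ t ∧ ({a, b, c} : Multiset ℤ) = {2, t, t} := by
  wlog hba : b ≤ a generalizing a b
  · obtain ⟨t, ht, h⟩ := this (a := b) (b := a) hb ha (by linear_combination heq) hmb hma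
      (by linarith [mul_comm a b]) (le_of_not_ge hba)
    exact ⟨t, ht, (Multiset.cons_swap _ _ _).trans h⟩
  wlog hca : c ≤ a generalizing a b c
  · have hac := (not_le.1 hca).le
    obtain ⟨t, ht, h⟩ := this (a := c) (c := a) ha hc hb (by linear_combination heq)
      (by linarith [mul_comm a b]) (by linarith [mul_comm a c]) (by linarith [mul_comm b c])
      (hba.trans hac) hac
    exact ⟨t, ht, (Multiset.coe_reverse [a, b, c]).symm.trans h⟩
  wlog hcb : c ≤ b generalizing b c
  · obtain ⟨t, ht, h⟩ := this (b := c) (c := b) hb hc (by linear_combination heq)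
      (by linarith [mul_comm b c]) hmc hmb hca hba (le_of_not_ge hcb)
    exact ⟨t, ht, (congrArg (a ::ₘ ·) (Multiset.pair_comm b c)).trans h⟩
  obtain ⟨rfl, rfl⟩ := eq_two_and_eq_of_sorted hc hcb hba heq hma
  exact ⟨a, hcb, (Multiset.coe_reverse [a, a, 2]).symm⟩

theorem multiset_eq_two_zero_zero_or_eq_one {a b c : ℤ} (ha : 0 ≤ a) (hb : 0 ≤ b) (hc : 0 ≤ c)
    (heq : a ^ 2 + b ^ 2 + c ^ 2 + a * b * c = 4) :
    ({a, b, c} : Multiset ℤ) = {2, 0, 0} ∨ (a = 1 ∧ b = 1 ∧ c = 1) := by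
  have habc : 0 ≤ a * b * c := by positivity
  have ha2 : a ≤ 2 := by nlinarith
  have hb2 : b ≤ 2 := by nlinarith
  have hc2 : c ≤ 2 := by nlinarith
  interval_cases a <;> interval_cases b <;> interval_cases c <;>
    first | (left; decide) | (right; decide) | norm_num at heq

/-- a weakly minimal integer solution of `x² + y² + z² − xyz = 4`
is, up to permutations and simultaneous sign changes of two coordinates,
equal to `(2,0,0)`, `(−1,1,1)` or `(2,t,t)` with `t ≥ 2`.  The respective
orbits under permutations and double sign changes are characterized by the
multiset of absolute values together with the product of the coordinates. -/
theorem stmt3 (x y z : ℤ)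
    (heq : x ^ 2 + y ^ 2 + z ^ 2 - x * y * z = 4)
    (hmx : |x| ≤ |y * z - x|) (hmy : |y| ≤ |x * z - y|) (hmz : |z| ≤ |x * y - z|) :
    ({|x|, |y|, |z|} : Multiset ℤ) = {2, 0, 0} ∨
    (|x| = 1 ∧ |y| = 1 ∧ |z| = 1 ∧ x * y * z = -1) ∨
    (∃ t : ℤ, 2 ≤ t ∧ ({|x|, |y|, |z|} : Multiset ℤ) = {2, t, t} ∧
      x * y * z = 2 * t ^ 2) := by
  have habs : |x * y * z| = |x| * |y| * |z| := by rw [abs_mul, abs_mul]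
  have hsq : x ^ 2 + y ^ 2 + z ^ 2 = |x| ^ 2 + |y| ^ 2 + |z| ^ 2 := by simp only [sq_abs]
  rcases le_or_gt (x * y * z) 0 with hp | hp
  · have hp' : x * y * z = -(|x| * |y| * |z|) := by rw [← habs, abs_of_nonpos hp, neg_neg]
    rcases multiset_eq_two_zero_zero_or_eq_one (abs_nonneg x) (abs_nonneg y) (abs_nonneg z)
      (by linarith) with h | ⟨h1, h2, h3⟩
    · exact Or.inl h
    · exact Or.inr (Or.inl ⟨h1, h2, h3, by rw [hp', h1, h2, h3]; norm_num⟩)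
  · have hp' : x * y * z = |x| * |y| * |z| := by rw [← habs, abs_of_pos hp]
    have hx : 0 < x * (y * z) := by rwa [← mul_assoc]
    have hy : 0 < y * (x * z) := by linarith [mul_left_comm x y z]
    have hz : 0 < z * (x * y) := by linarith [mul_comm z (x * y)]
    have hmx' := two_mul_abs_le_abs_of_abs_le_abs_sub hx hmx
    have hmy' := two_mul_abs_le_abs_of_abs_le_abs_sub hy hmy
    have hmz' := two_mul_abs_le_abs_of_abs_le_abs_sub hz hmz
    rw [abs_mul] at hmx' hmy' hmz'
    have hpos : 0 < |x| * |y| * |z| := hp' ▸ hp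
    obtain ⟨t, ht, hM⟩ := exists_multiset_eq_two_t_t
      (abs_pos.2 (left_ne_zero_of_mul (left_ne_zero_of_mul hp.ne')))
      (abs_pos.2 (right_ne_zero_of_mul (left_ne_zero_of_mul hp.ne')))
      (abs_pos.2 (right_ne_zero_of_mul hp.ne')) (by linarith) hmx' hmy' hmz'
    refine Or.inr (Or.inr ⟨t, ht, hM, ?_⟩)
    have hprod := congrArg Multiset.prod hM
    simp only [Multiset.insert_eq_cons, Multiset.prod_cons, Multiset.prod_singleton] at hprod
    rw [hp', mul_assoc, hprod]
    ring
end

section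
/- Let x, y, z be integers satisfying x² + xyz − a = y² + z² with a ∈ {0, 4}, and suppose |x|, |y|, |z| are pairwise distinct. Then mutation at the element of greatest absolute value (x̂ = −yz − x if it is x, ŷ = xz − y if it is y, ẑ = xy − z if it is z) strictly decreases |x| + |y| + |z|. -/
lemma lemA (a x y z : ℤ) (ha : a = 0 ∨ a = 4)
    (heq : x ^ 2 + x * y * z - a = y ^ 2 + z ^ 2)
    (hyz : |y| ≠ |z|) (h1 : |y| < |x|) (h2 : |z| < |x|) :
    |(-(y * z) - x)| < |x| := by
  have hx0 : 0 < |x| := lt_of_le_of_lt (abs_nonneg y) h1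
  have ha0 : 0 ≤ a := by rcases ha with h|h <;> omega
  have ha4 : a ≤ 4 := by rcases ha with h|h <;> omega
  have hxnn := abs_nonneg x
  have hynn := abs_nonneg y
  have hznn := abs_nonneg z
  have hprod : (-(y * z) - x) * x = -(y ^ 2 + z ^ 2 + a) := by linear_combination -heq
  have hnn : 0 ≤ y ^ 2 + z ^ 2 + a := by positivity
  have key : |(-(y * z) - x)| * |x| = y ^ 2 + z ^ 2 + a := by
    rw [← abs_mul, hprod, abs_neg, abs_of_nonneg hnn]
  have hsx : x ^ 2 = |x| * |x| := by rw [abs_mul_abs_self]; ring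
  have hsy : y ^ 2 = |y| * |y| := by rw [abs_mul_abs_self]; ring
  have hsz : z ^ 2 = |z| * |z| := by rw [abs_mul_abs_self]; ring
  have hneg : x * y * z < 0 := by
    by_contra hge
    push_neg at hge
    rcases eq_or_lt_of_le hge with he|hpos
    · have hx : x ≠ 0 := by
        intro h; rw [h] at hx0; simp at hx0
      have hyz0 : y = 0 ∨ z = 0 := by
        rcases mul_eq_zero.mp he.symm with h | h
        · rcases mul_eq_zero.mp h with h' | h'
          · exact absurd h' hx
          · exact Or.inl h'
        · exact Or.inr h
      rcases hyz0 with h0 | h0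
      · subst h0
        simp only [abs_zero] at hyz
        have hz1 : 1 ≤ |z| := by omega
        have he2 : x ^ 2 = z ^ 2 + a := by linear_combination heq
        have h2' : |z| + 1 ≤ |x| := h2
        have hmm : (|z| + 1) * (|z| + 1) ≤ |x| * |x| :=
          mul_self_le_mul_self (by omega) h2'
        have hzb : 2 * |z| + 1 ≤ 4 := by nlinarith [hmm, hsx, hsz, he2]
        have hz : |z| = 1 := by omega
        have hz2 : z ^ 2 = 1 := by rw [hsz, hz]; norm_num
        have hx2 : 2 ≤ |x| := by omega
        have hxle : |x| ≤ 2 := by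
          by_contra hc
          push_neg at hc
          have h3 : 3 ≤ |x| := by omega
          have : 9 ≤ |x| * |x| := by nlinarith
          linarith [hsx, he2]
        have hxe : |x| = 2 := by omega
        have : x ^ 2 = 4 := by rw [hsx, hxe]; norm_num
        omega
      · subst h0
        simp only [abs_zero] at hyz
        have hy1 : 1 ≤ |y| := by omega
        have he2 : x ^ 2 = y ^ 2 + a := by linear_combination heq
        have h1' : |y| + 1 ≤ |x| := h1
        have hmm : (|y| + 1) * (|y| + 1) ≤ |x| * |x| :=
          mul_self_le_mul_self (by omega) h1'
        have hyb : 2 * |y| + 1 ≤ 4 := by nlinarith [hmm, hsx, hsy, he2]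
        have hy : |y| = 1 := by omega
        have hy2 : y ^ 2 = 1 := by rw [hsy, hy]; norm_num
        have hx2 : 2 ≤ |x| := by omega
        have hxle : |x| ≤ 2 := by
          by_contra hc
          push_neg at hc
          have h3 : 3 ≤ |x| := by omega
          have : 9 ≤ |x| * |x| := by nlinarith
          linarith [hsx, he2]
        have hxe : |x| = 2 := by omega
        have : x ^ 2 = 4 := by rw [hsx, hxe]; norm_num
        omega
    · have hy : y ≠ 0 := by rintro rfl; simp at hpos
      have hz : z ≠ 0 := by rintro rfl; simp at hpos
      have hp1 : 1 ≤ |y| := Int.one_le_abs hy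
      have hq1 : 1 ≤ |z| := Int.one_le_abs hz
      have habs : x * y * z = |x| * |y| * |z| := by
        rw [← abs_mul, ← abs_mul]; exact (abs_of_pos hpos).symm
      have h1' : |y| + 1 ≤ |x| := h1
      have h2' : |z| + 1 ≤ |x| := h2
      have hkey : |x| * |y| * |z| ≥ |y| * |y| + |z| * |z| + 1 := by
        rcases lt_or_gt_of_ne hyz with h | h
        · -- |y| < |z|
          have hq2 : |y| + 1 ≤ |z| := h
          have A : 0 ≤ (|x| - |z| - 1) * (|y| * |z|) :=
            mul_nonneg (by omega) (mul_nonneg hynn hznn)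
          have B : 0 ≤ (|y| - 1) * (|z| * |z|) :=
            mul_nonneg (by omega) (mul_nonneg hznn hznn)
          have C : 0 ≤ |y| * (|z| - |y| - 1) :=
            mul_nonneg hynn (by omega)
          linarith [A, B, C, hp1]
        · have hp2 : |z| + 1 ≤ |y| := h
          have A : 0 ≤ (|x| - |y| - 1) * (|y| * |z|) :=
            mul_nonneg (by omega) (mul_nonneg hynn hznn)
          have B : 0 ≤ (|z| - 1) * (|y| * |y|) :=
            mul_nonneg (by omega) (mul_nonneg hynn hynn)
          have C : 0 ≤ |z| * (|y| - |z| - 1) :=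
            mul_nonneg hznn (by omega)
          linarith [A, B, C, hq1]
      have hn2 : 2 ≤ |x| := by omega
      have hn4 : 4 ≤ |x| * |x| := by
        have := mul_le_mul hn2 hn2 (by norm_num : (0:ℤ) ≤ 2) hxnn
        linarith
      linarith [heq, habs, hsx, hsy, hsz, hkey, hn4]
  have hlt : |(-(y * z) - x)| * |x| < |x| * |x| := by
    have : y ^ 2 + z ^ 2 + a < x ^ 2 := by linarith [heq]
    linarith [key, hsx]
  exact lt_of_mul_lt_mul_right hlt (abs_nonneg x)

lemma lemB (a x y z : ℤ) (ha : a = 0 ∨ a = 4)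
    (heq : x ^ 2 + x * y * z - a = y ^ 2 + z ^ 2)
    (hxz : |x| ≠ |z|) (h1 : |x| < |y|) (h2 : |z| < |y|) :
    |x * z - y| < |y| := by
  have hy0 : 0 < |y| := lt_of_le_of_lt (abs_nonneg x) h1
  have ha0 : 0 ≤ a := by rcases ha with h|h <;> omega
  have ha4 : a ≤ 4 := by rcases ha with h|h <;> omega
  have hxnn := abs_nonneg x
  have hynn := abs_nonneg y
  have hznn := abs_nonneg z
  have hprod : (x * z - y) * y = z ^ 2 + a - x ^ 2 := by linear_combination heq
  have hsx : x ^ 2 = |x| * |x| := by rw [abs_mul_abs_self]; ring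
  have hsy : y ^ 2 = |y| * |y| := by rw [abs_mul_abs_self]; ring
  have hsz : z ^ 2 = |z| * |z| := by rw [abs_mul_abs_self]; ring
  have hy3 : 3 ≤ |y| := by
    by_contra hc
    push_neg at hc
    have hy2 : |y| = 2 := by omega
    have hx1 : |x| ≤ 1 := by omega
    have hz1 : |z| ≤ 1 := by omega
    have hxz0 : x * z = 0 := by
      have : |x| = 0 ∨ |z| = 0 := by omega
      rcases this with h | h
      · rw [abs_eq_zero] at h; rw [h]; ring
      · rw [abs_eq_zero] at h; rw [h]; ring
    have hy4 : y ^ 2 = 4 := by rw [hsy, hy2]; norm_num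
    have h0 : x * y * z = 0 := by rw [mul_comm x y, mul_assoc, mul_comm y, hxz0]; ring
    have hx2 : x ^ 2 ≤ 1 := by
      rw [hsx]
      have := mul_le_mul hx1 hx1 hxnn (by norm_num : (0:ℤ) ≤ 1)
      linarith
    linarith [heq, sq_nonneg z]
  have h1' : |x| ≤ |y| - 1 := by omega
  have h2' : |z| ≤ |y| - 1 := by omega
  have hmx : |x| * |x| ≤ (|y| - 1) * (|y| - 1) := mul_self_le_mul_self hxnn h1'
  have hmz : |z| * |z| ≤ (|y| - 1) * (|y| - 1) := mul_self_le_mul_self hznn h2'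
  have hub : z ^ 2 + a - x ^ 2 < y ^ 2 := by linarith [hsy, hsz, hmz, sq_nonneg x, hy3, ha4]
  have hlb : -(y ^ 2) < z ^ 2 + a - x ^ 2 := by linarith [hsx, hsy, hmx, sq_nonneg z, ha0, hy0]
  have hlt : |x * z - y| * |y| < |y| * |y| := by
    rw [← abs_mul, hprod, abs_lt]
    constructor
    · linarith [hsy, hlb]
    · linarith [hsy, hub]
  exact lt_of_mul_lt_mul_right hlt (abs_nonneg y)

/-- for an integer solution of `x² + xyz − a = y² + z²` with
`a ∈ {0,4}` and pairwise distinct absolute values, mutation at the coordinate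
of greatest absolute value (`x̂ = −yz − x`, `ŷ = xz − y`, `ẑ = xy − z`)
strictly decreases `|x| + |y| + |z|`. -/
theorem stmt5 (a x y z : ℤ) (ha : a = 0 ∨ a = 4)
    (heq : x ^ 2 + x * y * z - a = y ^ 2 + z ^ 2)
    (hxy : |x| ≠ |y|) (hxz : |x| ≠ |z|) (hyz : |y| ≠ |z|) :
    (|y| < |x| → |z| < |x| → |(-(y * z) - x)| + |y| + |z| < |x| + |y| + |z|) ∧
    (|x| < |y| → |z| < |y| → |x| + |x * z - y| + |z| < |x| + |y| + |z|) ∧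
    (|x| < |z| → |y| < |z| → |x| + |y| + |x * y - z| < |x| + |y| + |z|) := by
  refine ⟨fun h1 h2 => ?_, fun h1 h2 => ?_, fun h1 h2 => ?_⟩
  · have := lemA a x y z ha heq hyz h1 h2
    linarith
  · have := lemB a x y z ha heq hxz h1 h2
    linarith
  · have heq' : x ^ 2 + x * z * y - a = z ^ 2 + y ^ 2 := by linear_combination heq
    have := lemB a x z y ha heq' hxy h1 h2
    linarith
end

section
/- Let (x, y, z) be an integer solution of x² + xyz = y² + z² that is weakly minimal with respect to the mutations x̂ = −yz − x, ŷ = xz − y, ẑ = xy − z (i.e. |x| ≤ |x̂|, |y| ≤ |ŷ|, |z| ≤ |ẑ|). Then (|x|, |y|, |z|) is of the form (t, t, 0) or (t, 0, t) for some t ≥ 0. -/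
/-- a weakly minimal integer solution of `x² + xyz = y² + z²`
(with respect to the mutations `x̂ = −yz − x`, `ŷ = xz − y`, `ẑ = xy − z`)
has `(|x|,|y|,|z|)` of the form `(t,t,0)` or `(t,0,t)` for some `t ≥ 0`. -/
theorem stmt6 (x y z : ℤ)
    (heq : x ^ 2 + x * y * z = y ^ 2 + z ^ 2)
    (hmx : |x| ≤ |(-(y * z) - x)|) (hmy : |y| ≤ |x * z - y|)
    (hmz : |z| ≤ |x * y - z|) :
    ∃ t : ℤ, 0 ≤ t ∧
      ((|x| = t ∧ |y| = t ∧ |z| = 0) ∨ (|x| = t ∧ |y| = 0 ∧ |z| = t)) := by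
  -- Vieta products
  have h1 : x ^ 2 ≤ y ^ 2 + z ^ 2 := by
    have h : |x| * |x| ≤ |x * (-(y * z) - x)| := by
      rw [abs_mul]; exact mul_le_mul_of_nonneg_left hmx (abs_nonneg x)
    have hx : x * (-(y * z) - x) = -(y ^ 2 + z ^ 2) := by nlinarith [heq]
    rw [hx, abs_neg, abs_of_nonneg (by positivity : (0:ℤ) ≤ y ^ 2 + z ^ 2)] at h
    nlinarith [sq_abs x]
  have h2 : y ^ 2 ≤ |z ^ 2 - x ^ 2| := by
    have h : |y| * |y| ≤ |y * (x * z - y)| := by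
      rw [abs_mul]; exact mul_le_mul_of_nonneg_left hmy (abs_nonneg y)
    have hx : y * (x * z - y) = z ^ 2 - x ^ 2 := by nlinarith [heq]
    rw [hx] at h
    nlinarith [sq_abs y]
  have h3 : z ^ 2 ≤ |y ^ 2 - x ^ 2| := by
    have h : |z| * |z| ≤ |z * (x * y - z)| := by
      rw [abs_mul]; exact mul_le_mul_of_nonneg_left hmz (abs_nonneg z)
    have hx : z * (x * y - z) = y ^ 2 - x ^ 2 := by nlinarith [heq]
    rw [hx] at h
    nlinarith [sq_abs z]
  have key : y = 0 ∨ z = 0 := by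
    by_contra hc
    push_neg at hc
    obtain ⟨hy, hz⟩ := hc
    have hy2 : 0 < y ^ 2 := by positivity
    have hz2 : 0 < z ^ 2 := by positivity
    rcases le_abs.mp h2 with h2' | h2' <;> rcases le_abs.mp h3 with h3' | h3'
    · -- y² ≤ z²−x², z² ≤ y²−x² ⇒ x = 0 ⇒ 0 = y²+z²
      have hx0 : x = 0 := by nlinarith [sq_nonneg x]
      subst hx0
      nlinarith
    · linarith
    · linarith
    · -- y² ≤ x²−z², z² ≤ x²−y², with x² ≤ y²+z² ⇒ x² = y²+z² ⇒ xyz = 0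
      have hxyz : x * y * z = 0 := by nlinarith
      rcases mul_eq_zero.mp hxyz with h | h
      · rcases mul_eq_zero.mp h with h | h
        · subst h; nlinarith
        · exact hy h
      · exact hz h
  rcases key with hy0 | hz0
  · subst hy0
    have hx2 : x ^ 2 = z ^ 2 := by nlinarith
    refine ⟨|x|, abs_nonneg x, Or.inr ⟨rfl, abs_zero, ?_⟩⟩
    exact ((sq_eq_sq_iff_abs_eq_abs x z).mp hx2).symm
  · subst hz0
    have hx2 : x ^ 2 = y ^ 2 := by nlinarith
    refine ⟨|x|, abs_nonneg x, Or.inl ⟨rfl, ?_, abs_zero⟩⟩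
    exact ((sq_eq_sq_iff_abs_eq_abs x y).mp hx2).symm
end

section
/- Let (x, y, z) be an integer solution of x² + xyz − 4 = y² + z² that is weakly minimal with respect to the mutations x̂ = −yz − x, ŷ = xz − y, ẑ = xy − z. Then (|x|, |y|, |z|) = (2, t, t) for some t ≥ 0. -/
private lemma aux_sq (a b : ℤ) (h : a ^ 2 = b ^ 2 + 4) : a ^ 2 = 4 ∧ b = 0 := by
  have h1 : |b| < |a| := by nlinarith [sq_abs a, sq_abs b, abs_nonneg a, abs_nonneg b]
  have h2 : |b| + 1 ≤ |a| := h1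
  have h3 : (|b| + 1) ^ 2 ≤ |a| ^ 2 := by nlinarith [abs_nonneg b, abs_nonneg a]
  have hb : |b| ≤ 1 := by nlinarith [sq_abs a, sq_abs b]
  obtain ⟨hbl, hbr⟩ := abs_le.mp hb
  have hbcases : b = -1 ∨ b = 0 ∨ b = 1 := by omega
  rcases hbcases with rfl | rfl | rfl
  · exfalso
    have h5 : a ^ 2 = 5 := by linarith
    have ha : |a| ≤ 3 := by nlinarith [sq_abs a, abs_nonneg a]
    obtain ⟨hal, har⟩ := abs_le.mp ha
    interval_cases a <;> norm_num at h5
  · norm_num at h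
    exact ⟨h, rfl⟩
  · exfalso
    have h5 : a ^ 2 = 5 := by linarith
    have ha : |a| ≤ 3 := by nlinarith [sq_abs a, abs_nonneg a]
    obtain ⟨hal, har⟩ := abs_le.mp ha
    interval_cases a <;> norm_num at h5

private lemma abs_eq_two' {a : ℤ} (h : a ^ 2 = 4) : |a| = 2 := by
  have h0 : (a - 2) * (a + 2) = 0 := by linear_combination h
  rcases mul_eq_zero.mp h0 with h' | h'
  · have ha : a = 2 := by linarith
    rw [ha]; norm_num
  · have ha : a = -2 := by linarith
    rw [ha]; norm_num

private lemma degen (x y z : ℤ)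
    (heq : x ^ 2 + x * y * z - 4 = y ^ 2 + z ^ 2)
    (hx2 : 4 ≤ x ^ 2)
    (hle : y ^ 2 + z ^ 2 ≤ x ^ 2 - 4)
    (hxyz : 0 ≤ x * y * z) :
    ∃ t : ℤ, 0 ≤ t ∧ |x| = 2 ∧ |y| = t ∧ |z| = t := by
  have h0 : x * y * z = 0 := le_antisymm (by linarith) hxyz
  have hx0 : x ≠ 0 := by rintro rfl; norm_num at hx2
  have hyz : y = 0 ∨ z = 0 := by
    rcases mul_eq_zero.mp h0 with h | h
    · rcases mul_eq_zero.mp h with h | h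
      · exact absurd h hx0
      · exact Or.inl h
    · exact Or.inr h
  rcases hyz with rfl | rfl
  · have hx : x ^ 2 = z ^ 2 + 4 := by linear_combination heq
    obtain ⟨h4, hz0⟩ := aux_sq x z hx
    exact ⟨0, le_refl 0, abs_eq_two' h4, by simp, by simp [hz0]⟩
  · have hx : x ^ 2 = y ^ 2 + 4 := by linear_combination heq
    obtain ⟨h4, hy0⟩ := aux_sq x y hx
    exact ⟨0, le_refl 0, abs_eq_two' h4, by simp [hy0], by simp⟩

/-- a weakly minimal integer solution of `x² + xyz − 4 = y² + z²`
(with respect to the mutations `x̂ = −yz − x`, `ŷ = xz − y`, `ẑ = xy − z`)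
has `(|x|,|y|,|z|) = (2,t,t)` for some `t ≥ 0`. -/
theorem stmt7 (x y z : ℤ)
    (heq : x ^ 2 + x * y * z - 4 = y ^ 2 + z ^ 2)
    (hmx : |x| ≤ |(-(y * z) - x)|) (hmy : |y| ≤ |x * z - y|)
    (hmz : |z| ≤ |x * y - z|) :
    ∃ t : ℤ, 0 ≤ t ∧ |x| = 2 ∧ |y| = t ∧ |z| = t := by
  have e1 : x * (-(y * z) - x) = -(4 + y ^ 2 + z ^ 2) := by linear_combination -heq
  have e2 : y * (x * z - y) = z ^ 2 + 4 - x ^ 2 := by linear_combination heq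
  have e3 : z * (x * y - z) = y ^ 2 + 4 - x ^ 2 := by linear_combination heq
  have hx1 : x ^ 2 ≤ 4 + y ^ 2 + z ^ 2 := by
    calc x ^ 2 = |x| * |x| := by rw [abs_mul_abs_self]; ring
      _ ≤ |x| * |(-(y * z) - x)| := mul_le_mul_of_nonneg_left hmx (abs_nonneg x)
      _ = |x * (-(y * z) - x)| := (abs_mul _ _).symm
      _ = 4 + y ^ 2 + z ^ 2 := by
          rw [e1, abs_neg]; exact abs_of_nonneg (by positivity)
  have hxyz : 0 ≤ x * y * z := by linarith
  have hy2 : y ^ 2 ≤ |z ^ 2 + 4 - x ^ 2| := by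
    calc y ^ 2 = |y| * |y| := by rw [abs_mul_abs_self]; ring
      _ ≤ |y| * |x * z - y| := mul_le_mul_of_nonneg_left hmy (abs_nonneg y)
      _ = |y * (x * z - y)| := (abs_mul _ _).symm
      _ = |z ^ 2 + 4 - x ^ 2| := by rw [e2]
  have hz2 : z ^ 2 ≤ |y ^ 2 + 4 - x ^ 2| := by
    calc z ^ 2 = |z| * |z| := by rw [abs_mul_abs_self]; ring
      _ ≤ |z| * |x * y - z| := mul_le_mul_of_nonneg_left hmz (abs_nonneg z)
      _ = |z * (x * y - z)| := (abs_mul _ _).symm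
      _ = |y ^ 2 + 4 - x ^ 2| := by rw [e3]
  have hx2 : 4 ≤ x ^ 2 := by
    rcases le_or_gt 4 (x ^ 2) with h | h
    · exact h
    · exfalso
      have hb1 : -1 ≤ x := by nlinarith [sq_nonneg (x + 2)]
      have hb2 : x ≤ 1 := by nlinarith [sq_nonneg (x - 2)]
      interval_cases x <;>
        nlinarith [sq_nonneg (y + z), sq_nonneg (y - z), sq_nonneg y, sq_nonneg z]
  rcases le_or_gt 0 (z ^ 2 + 4 - x ^ 2) with hA | hA
  · rcases le_or_gt 0 (y ^ 2 + 4 - x ^ 2) with hB | hB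
    · rw [abs_of_nonneg hA] at hy2
      rw [abs_of_nonneg hB] at hz2
      have hx4 : x ^ 2 = 4 := by linarith
      have hyz : y ^ 2 = z ^ 2 := by linarith
      have hzy : |z| = |y| := by
        have h0 : (z - y) * (z + y) = 0 := by linear_combination -hyz
        rcases mul_eq_zero.mp h0 with h' | h'
        · have hzz : z = y := by linarith
          rw [hzz]
        · have hzz : z = -y := by linarith
          rw [hzz, abs_neg]
      exact ⟨|y|, abs_nonneg y, abs_eq_two' hx4, rfl, hzy⟩
    · rw [abs_of_neg hB] at hz2
      exact degen x y z heq hx2 (by linarith) hxyz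
  · rw [abs_of_neg hA] at hy2
    exact degen x y z heq hx2 (by linarith) hxyz
end

section
/- If integers x, y, z > 0 satisfy x² + xyz = y² + z² + a with a ∈ {0,4} and y > x > z, then xz < y, i.e. the mutation ŷ = xz − y satisfies |ŷ| < |y|. -/
/-- if `x, y, z > 0` satisfy `x² + xyz = y² + z² + a` with
`a ∈ {0,4}` and `y > x > z`, then `xz < y`; in particular the mutation
`ŷ = xz − y` satisfies `|ŷ| < |y|`. -/
theorem stmt8 (a x y z : ℤ) (ha : a = 0 ∨ a = 4)
    (hx : 0 < x) (hy : 0 < y) (hz : 0 < z)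
    (heq : x ^ 2 + x * y * z = y ^ 2 + z ^ 2 + a)
    (hxy : x < y) (hzx : z < x) :
    x * z < y ∧ |x * z - y| < |y| := by
  have hw : y * (x * z - y) = z ^ 2 + a - x ^ 2 := by ring_nf; linarith [heq]
  have hmain : x * z < y := by
    by_contra h
    push_neg at h
    have h1 : 0 ≤ y * (x * z - y) := mul_nonneg hy.le (by linarith)
    rcases ha with ha | ha
    · subst ha; nlinarith
    · subst ha
      have hz1 : z = 1 := by nlinarith
      subst hz1
      have hx2 : x = 2 := by nlinarith
      subst hx2
      nlinarith
  refine ⟨hmain, ?_⟩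
  have hxz : 0 < x * z := mul_pos hx hz
  rw [abs_of_neg (by linarith : x * z - y < 0), abs_of_pos hy]
  linarith
end

section
/- Let a, b be odd coprime integers and ε ∈ {±1}. Then the triple (x₁, x₂, x₃) = (L_a, −ε·L_{a+εb}, L_b) satisfies x₁² − x₂² + x₃² + x₁x₂x₃ = 4; equivalently, −L_{a+b} and L_{a−b} are the two roots of the quadratic polynomial X² + L_a·L_b·X − (L_a² + L_b² + 4). -/
/-- Fibonacci numbers extended to all integer indices. -/
def fibZ : ℤ → ℤ
  | Int.ofNat n => Nat.fib n
  | Int.negSucc n => (-1) ^ n * Nat.fib (n + 1)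

/-- Lucas numbers extended to all integer indices: `L_n = F_{n−1} + F_{n+1}`. -/
def lucZ (n : ℤ) : ℤ := fibZ (n - 1) + fibZ (n + 1)

/-! By Binet's formula `L_n = φⁿ + ψⁿ`, and for odd `n` we have `ψⁿ = -φ⁻ⁿ` because `φψ = -1`.
For odd `a`, `b` both `L_a L_b = L_{a+b} - L_{a-b}` and `L_{a+b} L_{a-b} = L_a² + L_b² + 4` then
become rational identities in `φᵃ` and `φᵇ`, and Vieta's formulas give the claim. -/

open Real goldenRatio

theorem fibZ_eq_fib : ∀ n : ℤ, fibZ n = Int.fib n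
  | Int.ofNat _ => rfl
  | Int.negSucc n => by
    rw [fibZ, Int.negSucc_eq, ← Nat.cast_succ, Int.fib_neg_natCast, pow_succ, pow_succ]
    ring

theorem cast_lucZ (n : ℤ) : (lucZ n : ℝ) = φ ^ n + ψ ^ n := by
  rw [lucZ, Int.cast_add, fibZ_eq_fib, fibZ_eq_fib, coe_intFib_eq, coe_intFib_eq,
    zpow_sub_one₀ goldenRatio_ne_zero, zpow_add_one₀ goldenRatio_ne_zero,
    zpow_sub_one₀ goldenConj_ne_zero, zpow_add_one₀ goldenConj_ne_zero,
    inv_goldenRatio, inv_goldenConj, ← goldenRatio_sub_goldenConj]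
  field_simp
  ring

theorem goldenConj_zpow_of_odd {n : ℤ} (hn : Odd n) : ψ ^ n = -(φ ^ n)⁻¹ := by
  rw [← inv_zpow, inv_goldenRatio, hn.neg_zpow, neg_neg]

theorem lucZ_mul_lucZ_of_odd (a : ℤ) {b : ℤ} (hb : Odd b) :
    lucZ a * lucZ b = lucZ (a + b) - lucZ (a - b) := by
  apply Int.cast_injective (α := ℝ)
  push_cast
  simp only [cast_lucZ, zpow_add₀ goldenRatio_ne_zero, zpow_add₀ goldenConj_ne_zero,
    zpow_sub₀ goldenRatio_ne_zero, zpow_sub₀ goldenConj_ne_zero, goldenConj_zpow_of_odd hb]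
  field_simp
  ring

theorem lucZ_add_mul_lucZ_sub_of_odd {a b : ℤ} (ha : Odd a) (hb : Odd b) :
    lucZ (a + b) * lucZ (a - b) = lucZ a ^ 2 + lucZ b ^ 2 + 4 := by
  apply Int.cast_injective (α := ℝ)
  push_cast
  simp only [cast_lucZ, zpow_add₀ goldenRatio_ne_zero, zpow_add₀ goldenConj_ne_zero,
    zpow_sub₀ goldenRatio_ne_zero, zpow_sub₀ goldenConj_ne_zero, goldenConj_zpow_of_odd ha,
    goldenConj_zpow_of_odd hb]
  field_simp
  ring

theorem stmt15_general (a b ε : ℤ) (ha : Odd a) (hb : Odd b)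
    (hε : ε = 1 ∨ ε = -1) :
    (lucZ a) ^ 2 - (-ε * lucZ (a + ε * b)) ^ 2 + (lucZ b) ^ 2
        - lucZ a * (-ε * lucZ (a + ε * b)) * lucZ b = -4 ∧
    (-lucZ (a + b)) ^ 2 + lucZ a * lucZ b * (-lucZ (a + b))
        - (lucZ a ^ 2 + lucZ b ^ 2 + 4) = 0 ∧
    (lucZ (a - b)) ^ 2 + lucZ a * lucZ b * (lucZ (a - b))
        - (lucZ a ^ 2 + lucZ b ^ 2 + 4) = 0 := by
  have hsum := lucZ_mul_lucZ_of_odd a hb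
  have hprod := lucZ_add_mul_lucZ_sub_of_odd ha hb
  have hplus : (-lucZ (a + b)) ^ 2 + lucZ a * lucZ b * (-lucZ (a + b))
      - (lucZ a ^ 2 + lucZ b ^ 2 + 4) = 0 := by
    linear_combination (-lucZ (a + b)) * hsum + hprod
  have hminus : (lucZ (a - b)) ^ 2 + lucZ a * lucZ b * (lucZ (a - b))
      - (lucZ a ^ 2 + lucZ b ^ 2 + 4) = 0 := by
    linear_combination lucZ (a - b) * hsum + hprod
  refine ⟨?_, hplus, hminus⟩
  rcases hε with rfl | rfl
  · rw [one_mul]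
    linear_combination -hplus
  · rw [neg_one_mul, ← sub_eq_add_neg]
    linear_combination -hminus

/-- for `a, b` odd coprime and `ε = ±1`, the triple
`(x₁,x₂,x₃) = (L_a, −ε·L_{a+εb}, L_b)` solves
`x₁² − x₂² + x₃² − x₁x₂x₃ = −4` (the equation of `S₄^{1,−1,1}`);
equivalently, `−L_{a+b}` and `L_{a−b}` are the two roots of
`X² + L_a·L_b·X − (L_a² + L_b² + 4)`. -/
theorem stmt15 (a b ε : ℤ) (ha : Odd a) (hb : Odd b) (hab : IsCoprime a b)
    (hε : ε = 1 ∨ ε = -1) :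
    (lucZ a) ^ 2 - (-ε * lucZ (a + ε * b)) ^ 2 + (lucZ b) ^ 2
        - lucZ a * (-ε * lucZ (a + ε * b)) * lucZ b = -4 ∧
    (-lucZ (a + b)) ^ 2 + lucZ a * lucZ b * (-lucZ (a + b))
        - (lucZ a ^ 2 + lucZ b ^ 2 + 4) = 0 ∧
    (lucZ (a - b)) ^ 2 + lucZ a * lucZ b * (lucZ (a - b))
        - (lucZ a ^ 2 + lucZ b ^ 2 + 4) = 0 :=
  stmt15_general a b ε ha hb hε
end

section
/- Let a > 3 be an odd integer and let b, b' be odd integers coprime with a. Set I(b) = L_b / F_{b+a} viewed modulo F_a (well-defined since F_{b+a} is invertible mod F_a). Then I(b) ≡ ± I(b') (mod F_a) if and only if b ≡ ± b' (mod a). -/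
open Nat

theorem Nat.two_mul_fib_lt_fib {g m : ℕ} (hm : 4 ≤ m) (hg : 2 * g ≤ m) : 2 * fib g < fib m := by
  rcases Nat.lt_or_ge g 2 with hg1 | hg2
  · have hfg : fib g ≤ 1 := by interval_cases g <;> simp
    have hfm : fib 4 ≤ fib m := fib_mono hm
    have hf4 : fib 4 = 3 := rfl
    omega
  · have hlt : fib g < fib (g + 1) := fib_lt_fib_succ hg2
    have hle : fib (g + 2) ≤ fib m := fib_mono (by omega)
    rw [fib_add_two] at hle
    omega

theorem Nat.dvd_of_fib_dvd_two_mul_fib {m n : ℕ} (hm : 4 ≤ m) (h : fib m ∣ 2 * fib n) :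
    m ∣ n := by
  have hg : fib m ∣ 2 * fib (m.gcd n) := by
    rw [fib_gcd, ← Nat.gcd_mul_left]
    exact Nat.dvd_gcd (dvd_mul_left _ 2) h
  have hgpos : 0 < m.gcd n := Nat.gcd_pos_of_pos_left n (by omega)
  obtain ⟨t, ht⟩ := Nat.gcd_dvd_left m n
  have ht0 : t ≠ 0 := by rintro rfl; omega
  obtain rfl | ht2 : t = 1 ∨ 2 ≤ t := by omega
  · rw [← Nat.gcd_eq_left_iff_dvd, ← mul_one (m.gcd n), ← ht]
  · have h2g : 2 * m.gcd n ≤ m :=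
      calc 2 * m.gcd n ≤ m.gcd n * t := by rw [mul_comm]; exact Nat.mul_le_mul_left _ ht2
        _ = m := ht.symm
    have hle := Nat.le_of_dvd (by simpa using fib_pos.mpr hgpos) hg
    exact absurd hle (not_le.mpr (two_mul_fib_lt_fib hm h2g))

theorem fibZ_natCast (n : ℕ) : fibZ n = fib n := rfl

theorem fibZ_neg_natCast (n : ℕ) : fibZ (-n) = -(-1) ^ n * fib n := by
  cases n with
  | zero => rfl
  | succ n =>
    rw [show -((n + 1 : ℕ) : ℤ) = Int.negSucc n from rfl]
    simp only [fibZ, pow_succ]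
    ring

theorem fibZ_neg (n : ℤ) : fibZ (-n) = -n.negOnePow * fibZ n := by
  obtain ⟨k, rfl | rfl⟩ := Int.eq_nat_or_neg n
  · rw [fibZ_neg_natCast, Int.coe_negOnePow_natCast, fibZ_natCast]
  · rw [neg_neg, fibZ_neg_natCast, Int.negOnePow_neg, Int.coe_negOnePow_natCast, fibZ_natCast,
      ← mul_assoc, neg_mul_neg, ← mul_pow, neg_one_mul, neg_neg, one_pow, one_mul]

theorem natAbs_fibZ (n : ℤ) : (fibZ n).natAbs = fib n.natAbs := by
  obtain ⟨k, rfl | rfl⟩ := Int.eq_nat_or_neg n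
  · rfl
  · simp [fibZ_neg_natCast, Int.natAbs_mul]

theorem fibZ_add_two (n : ℤ) : fibZ (n + 2) = fibZ n + fibZ (n + 1) := by
  obtain ⟨k, rfl | rfl⟩ := Int.eq_nat_or_neg n
  · show ((fib (k + 2) : ℕ) : ℤ) = fib k + fib (k + 1)
    rw [fib_add_two, Nat.cast_add]
  · match k with
    | 0 => rfl
    | 1 => rfl
    | k + 2 =>
      rw [show -((k + 2 : ℕ) : ℤ) + 2 = -(k : ℤ) by push_cast; ring,
        show -((k + 2 : ℕ) : ℤ) + 1 = -((k + 1 : ℕ) : ℤ) by push_cast; ring,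
        fibZ_neg_natCast, fibZ_neg_natCast, fibZ_neg_natCast, fib_add_two]
      push_cast
      ring

theorem eq_zero_of_fib_recurrence {G : Type*} [AddCommGroup G] {f : ℤ → G}
    (hf : ∀ n, f (n + 2) = f n + f (n + 1)) (h0 : f 0 = 0) (h1 : f 1 = 0) : f = 0 := by
  suffices ∀ n, f n = 0 ∧ f (n + 1) = 0 from funext fun n ↦ (this n).1
  intro n
  induction n with
  | zero => exact ⟨h0, by simpa using h1⟩
  | succ n ih =>
    refine ⟨ih.2, ?_⟩
    rw [add_assoc, one_add_one_eq_two, hf, ih.1, ih.2, add_zero]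
  | pred n ih =>
    refine ⟨?_, by simpa using ih.1⟩
    have h := hf (-n - 1)
    rw [show -(n : ℤ) - 1 + 2 = -n + 1 by ring, show -(n : ℤ) - 1 + 1 = -n by ring, ih.1, ih.2] at h
    simpa using h.symm

theorem fibZ_add (m n : ℤ) :
    fibZ (m + n + 1) = fibZ m * fibZ n + fibZ (m + 1) * fibZ (n + 1) := by
  have h := eq_zero_of_fib_recurrence
    (f := fun n ↦ fibZ (m + n + 1) - (fibZ m * fibZ n + fibZ (m + 1) * fibZ (n + 1)))
    (fun n ↦ by
      rw [show m + (n + 2) + 1 = m + n + 1 + 2 by ring, show m + (n + 1) + 1 = m + n + 1 + 1 by ring,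
        show n + 2 + 1 = n + 1 + 2 by ring, fibZ_add_two, fibZ_add_two, fibZ_add_two]
      ring)
    (by simp [show fibZ 1 = 1 from rfl, show fibZ 0 = 0 from rfl])
    (by
      change fibZ (m + 1 + 1) - (fibZ m * 1 + fibZ (m + 1) * 1) = 0
      rw [add_assoc, one_add_one_eq_two, fibZ_add_two]
      ring)
  simpa [sub_eq_zero] using congrFun h n

theorem lucZ_mul_fibZ_add_fibZ_mul_lucZ (m n : ℤ) :
    lucZ m * fibZ n + fibZ m * lucZ n = 2 * fibZ (m + n) := by
  have h₁ := fibZ_add (m - 1) n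
  have h₂ := fibZ_add (n - 1) m
  simp only [sub_add_cancel, show m - 1 + n + 1 = m + n by ring,
    show n - 1 + m + 1 = m + n by ring] at h₁ h₂
  rw [lucZ, lucZ]
  linear_combination -h₁ - h₂

theorem lucZ_neg (n : ℤ) : lucZ (-n) = n.negOnePow * lucZ n := by
  rw [lucZ, lucZ, show -n - 1 = -(n + 1) by ring, show -n + 1 = -(n - 1) by ring, fibZ_neg,
    fibZ_neg, Int.negOnePow_succ, Int.negOnePow_sub, Int.negOnePow_one]
  push_cast
  ring

theorem fibZ_mul_lucZ_sub_lucZ_mul_fibZ (m n : ℤ) :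
    fibZ m * lucZ n - lucZ m * fibZ n = n.negOnePow * (2 * fibZ (m - n)) := by
  have h := lucZ_mul_fibZ_add_fibZ_mul_lucZ m (-n)
  have hε : (n.negOnePow : ℤ) * n.negOnePow = 1 := by
    rw [← Units.val_mul, Int.units_mul_self, Units.val_one]
  rw [fibZ_neg, lucZ_neg, ← sub_eq_add_neg] at h
  linear_combination (n.negOnePow : ℤ) * h - (fibZ m * lucZ n - lucZ m * fibZ n) * hε

theorem isCoprime_fibZ_fibZ_add_one (n : ℤ) : IsCoprime (fibZ n) (fibZ (n + 1)) := by
  have cassini := fibZ_add n (-n)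
  rw [show n + -n + 1 = 1 by ring, show -n + 1 = -(n - 1) by ring, fibZ_neg, fibZ_neg,
    Int.negOnePow_sub, Int.negOnePow_one, show fibZ 1 = 1 from rfl] at cassini
  push_cast at cassini
  exact ⟨-n.negOnePow * fibZ n, n.negOnePow * fibZ (n - 1), by linear_combination -cassini⟩

theorem fibZ_dvd_fibZ {m n : ℤ} (h : m ∣ n) : fibZ m ∣ fibZ n := by
  rw [← Int.natAbs_dvd_natAbs, natAbs_fibZ, natAbs_fibZ]
  exact fib_dvd _ _ (Int.natAbs_dvd_natAbs.mpr h)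

theorem fibZ_dvd_two_mul_fibZ_iff {m : ℤ} (n : ℤ) (hm : 3 < m) :
    fibZ m ∣ 2 * fibZ n ↔ m ∣ n := by
  refine ⟨fun h ↦ ?_, fun h ↦ dvd_mul_of_dvd_right (fibZ_dvd_fibZ h) 2⟩
  rw [← Int.natAbs_dvd_natAbs, Int.natAbs_mul, natAbs_fibZ, natAbs_fibZ] at h
  exact Int.natAbs_dvd_natAbs.mp (dvd_of_fib_dvd_two_mul_fib (by omega) h)

theorem fibZ_dvd_mul_fibZ_add_add_iff (a b b' c c' : ℤ) :
    fibZ a ∣ c * fibZ (b' + a) + c' * fibZ (b + a) ↔ fibZ a ∣ c * fibZ b' + c' * fibZ b := by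
  have h := fibZ_add (b - 1) a
  have h' := fibZ_add (b' - 1) a
  simp only [sub_add_cancel, show ∀ x, x - 1 + a + 1 = x + a from fun x ↦ by ring] at h h'
  rw [h, h', show c * (fibZ (b' - 1) * fibZ a + fibZ b' * fibZ (a + 1)) +
      c' * (fibZ (b - 1) * fibZ a + fibZ b * fibZ (a + 1)) =
      fibZ a * (c * fibZ (b' - 1) + c' * fibZ (b - 1)) + fibZ (a + 1) * (c * fibZ b' + c' * fibZ b)
      by ring, dvd_add_right (dvd_mul_right _ _)]
  exact ⟨(isCoprime_fibZ_fibZ_add_one a).dvd_of_dvd_mul_left, (Dvd.dvd.mul_left · _)⟩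

theorem stmt19_general (a b b' : ℤ) (ha3 : 3 < a) :
    (fibZ a ∣ lucZ b * fibZ (b' + a) - lucZ b' * fibZ (b + a) ∨
     fibZ a ∣ lucZ b * fibZ (b' + a) + lucZ b' * fibZ (b + a)) ↔
    (a ∣ b - b' ∨ a ∣ b + b') := by
  have hsub : fibZ a ∣ lucZ b * fibZ (b' + a) - lucZ b' * fibZ (b + a) ↔ a ∣ b - b' := by
    rw [sub_eq_add_neg, ← neg_mul, fibZ_dvd_mul_fibZ_add_add_iff, ← dvd_neg,
      show -(lucZ b * fibZ b' + -lucZ b' * fibZ b) = fibZ b * lucZ b' - lucZ b * fibZ b' by ring,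
      fibZ_mul_lucZ_sub_lucZ_mul_fibZ, Units.dvd_mul_left, fibZ_dvd_two_mul_fibZ_iff _ ha3]
  have hadd : fibZ a ∣ lucZ b * fibZ (b' + a) + lucZ b' * fibZ (b + a) ↔ a ∣ b + b' := by
    rw [fibZ_dvd_mul_fibZ_add_add_iff, mul_comm (lucZ b'), lucZ_mul_fibZ_add_fibZ_mul_lucZ,
      fibZ_dvd_two_mul_fibZ_iff _ ha3]
  rw [hsub, hadd]

/-- for `a > 3` odd and `b, b'` odd and coprime with `a`,
one has `I(b) ≡ ± I(b') (mod F_a)` if and only if `b ≡ ± b' (mod a)`,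
where `I(b) = L_b / F_{b+a} mod F_a` (well defined since `F_{b+a}` is
invertible modulo `F_a`); the congruence of the quotients is expressed by
cross-multiplication. -/
theorem stmt19 (a b b' : ℤ) (ha : Odd a) (ha3 : 3 < a)
    (hb : Odd b) (hb' : Odd b')
    (hba : IsCoprime b a) (hb'a : IsCoprime b' a) :
    (fibZ a ∣ lucZ b * fibZ (b' + a) - lucZ b' * fibZ (b + a) ∨
     fibZ a ∣ lucZ b * fibZ (b' + a) + lucZ b' * fibZ (b + a)) ↔
    (a ∣ b - b' ∨ a ∣ b + b') :=
  stmt19_general a b b' ha3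
end
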